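/- For every real q ≥ 2 and every m ∈ [0, 1/2], one has (1-m)^{2/q} + m^{2/q} - 1 ≥ (2 - 2^{1-2/q}) m^{2/q}, with equality at m = 0 and m = 1/2. -/
import Mathlib


/-- Deficit-splitting inequality: for `q ≥ 2` (with `q = 2Q/(Q-2)`, so that
`2/q = 1 - 2/Q`) and `m ∈ [0,1/2]`,
`(1-m)^{2/q} + m^{2/q} - 1 ≥ (2 - 2^{1-2/Q}) m^{2/q}`, with equality at
`m = 0` and at `m = 1/2`. -/
theorem deficit_splitting (q Q : ℝ) (hq : 2 ≤ q) (hqQ : 2 / q = 1 - 2 / Q) :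
    (∀ m : ℝ, 0 ≤ m → m ≤ 1 / 2 →
        (2 - 2 ^ (1 - 2 / Q)) * m ^ (2 / q) ≤ (1 - m) ^ (2 / q) + m ^ (2 / q) - 1) ∧
    ((1 - (0 : ℝ)) ^ (2 / q) + (0 : ℝ) ^ (2 / q) - 1 =
        (2 - 2 ^ (1 - 2 / Q)) * (0 : ℝ) ^ (2 / q)) ∧
    ((1 - (1 / 2 : ℝ)) ^ (2 / q) + (1 / 2 : ℝ) ^ (2 / q) - 1 =
        (2 - 2 ^ (1 - 2 / Q)) * (1 / 2 : ℝ) ^ (2 / q)) := by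
  set p : ℝ := 2 / q with hp
  rw [← hqQ]
  have hq0 : (0 : ℝ) < q := lt_of_lt_of_le (by norm_num) hq
  have hp0 : 0 < p := div_pos (by norm_num) hq0
  have hp1 : p ≤ 1 := by
    rw [hp, div_le_one hq0]; exact hq
  have h2p : (2 : ℝ) ^ p * (1 / 2 : ℝ) ^ p = 1 := by
    rw [← Real.mul_rpow (by norm_num) (by norm_num)]
    norm_num
  have h2p1 : (1 : ℝ) ≤ (2 : ℝ) ^ p := by
    calc (1 : ℝ) = (2 : ℝ) ^ (0 : ℝ) := by rw [Real.rpow_zero]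
    _ ≤ 2 ^ p := Real.rpow_le_rpow_left_iff (by norm_num) |>.mpr hp0.le
  refine ⟨?_, ?_, ?_⟩
  · intro m hm0 hm2
    have hcc := Real.concaveOn_rpow hp0.le hp1
    have ha : (0 : ℝ) ≤ 1 - 2 * m := by linarith
    have hb : (0 : ℝ) ≤ 2 * m := by linarith
    have hab : (1 - 2 * m) + 2 * m = 1 := by ring
    have h1 := hcc.2 (Set.mem_Ici.mpr (by norm_num : (0:ℝ) ≤ 1))
      (Set.mem_Ici.mpr (by norm_num : (0:ℝ) ≤ 1/2)) ha hb hab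
    have h2 := hcc.2 (Set.mem_Ici.mpr (le_refl (0:ℝ)))
      (Set.mem_Ici.mpr (by norm_num : (0:ℝ) ≤ 1/2)) ha hb hab
    simp only [smul_eq_mul] at h1 h2
    have e1 : (1 - 2*m) * 1 + 2*m * (1/2) = 1 - m := by ring
    have e2 : (1 - 2*m) * 0 + 2*m * (1/2) = m := by ring
    rw [e1] at h1
    rw [e2] at h2
    rw [Real.one_rpow] at h1
    rw [Real.zero_rpow hp0.ne'] at h2
    -- h1 : (1-2m)*1 + 2m*(1/2)^p ≤ (1-m)^p
    -- h2 : (1-2m)*0 + 2m*(1/2)^p ≤ m^p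
    have key : (2 ^ p - 1) * (2 * m * (1/2:ℝ) ^ p) ≤ (2 ^ p - 1) * m ^ p :=
      mul_le_mul_of_nonneg_left (by linarith) (by linarith)
    have hfin : (1 - 2*m) + 2^p * (2 * m * (1/2:ℝ)^p) = 1 := by
      have : (2:ℝ)^p * (2 * m * (1/2)^p) = 2 * m * (2^p * (1/2)^p) := by ring
      rw [this, h2p]; ring
    nlinarith [h1, key, hfin]
  · rw [Real.zero_rpow hp0.ne']; norm_num
  · have : ((1:ℝ) - 1/2) = (1/2 : ℝ) := by norm_num
    rw [this]
    have h := h2p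
    nlinarith [h2p]
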